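/- There exists a constant C > 0 such that for all real y, z and all s > 0, |∂²/(∂y ∂s) W_s(y,z)| ≤ C e^{-((y - e^{-s}z)^2 + (z - e^{-s}y)^2)/(16(1 - e^{-2s}))} · e^{-s/2} (1 - e^{-2s})^{-2}, where W_s is the Hermite heat kernel. -/

import Mathlib

open MeasureTheory Real

/-- The Hermite (Mehler) heat kernel `W_s(x,y)`. -/
noncomputable def hermiteHeatKernel (s x y : ℝ) : ℝ :=
  Real.pi ^ (-(1 : ℝ) / 2) * (Real.exp (-s) / (1 - Real.exp (-2 * s))) ^ ((1 : ℝ) / 2) *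
    Real.exp (-((x - Real.exp (-s) * y) ^ 2 + (y - Real.exp (-s) * x) ^ 2) /
      (2 * (1 - Real.exp (-2 * s))))

/-!
Writing `W = exp (log W)`, the mixed derivative is `W * (∂ᵧ log W * ∂ₛ log W + ∂ᵧ∂ₛ log W)`.
With `q = e^{-s}`, `r = 1 - q²`, `a = y - q z`, `b = z - q y` and `P = a² + b²`, the second factor
is at most `√P / r² * (7 + 2 P / r)` in absolute value, because `|a|, |b| ≤ √P` and `r ≤ 1`.
Of the Gaussian factor `e^{-P/(2r)}` of `W` we keep `e^{-P/(16r)}`; the remaining `e^{-7P/(16r)}`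
absorbs the polynomial growth `√(P/r) * (7 + 2 P / r)`, and the prefactor `(q/r)^{1/2}` of `W`
supplies `e^{-s/2}` and the last power `r^{-1/2}`.
-/

/-- With `q = e^{-s}`, `a = y - q z`, `b = z - q y`, this is `∂ₛ log W_s(y,z)`, and
`kernelMixedDerivRatio q a b` below is `W⁻¹ ∂ᵧ∂ₛ W`. -/
noncomputable def kernelTimeLogDeriv (q a b : ℝ) : ℝ :=
  -1 / 2 - q ^ 2 / (1 - q ^ 2) - 2 * q * a * b / (1 - q ^ 2) ^ 2

noncomputable def kernelMixedDerivRatio (q a b : ℝ) : ℝ :=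
  (q * b - a) / (1 - q ^ 2) * kernelTimeLogDeriv q a b - 2 * q * (b - q * a) / (1 - q ^ 2) ^ 2

lemma sqrt_mul_linear_le_exp {u : ℝ} (hu : 0 ≤ u) :
    √u * (7 + 2 * u) ≤ 11 * exp (7 / 16 * u) := by
  have hsqrt : √u ≤ (1 + u) / 2 := by
    nlinarith [sq_sqrt hu, sq_nonneg (√u - 1)]
  have hexp := quadratic_le_exp_of_nonneg (by positivity : 0 ≤ 7 / 16 * u)
  nlinarith [mul_le_mul_of_nonneg_right hsqrt (by positivity : 0 ≤ 7 + 2 * u)]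

lemma abs_kernelTimeLogDeriv_le {q : ℝ} (hq : q ^ 2 < 1) (a b : ℝ) :
    |kernelTimeLogDeriv q a b| ≤ 1 / 2 + 1 / (1 - q ^ 2) + (a ^ 2 + b ^ 2) / (1 - q ^ 2) ^ 2 := by
  have hr : 0 < 1 - q ^ 2 := by linarith
  have hq1 : |q| ≤ 1 := (abs_lt_of_sq_lt_sq' (by simpa using hq) zero_le_one).2.le
  have hqab : |2 * q * a * b| ≤ a ^ 2 + b ^ 2 := by
    calc |2 * q * a * b| = |q| * (2 * (|a| * |b|)) := by simp only [abs_mul, abs_two]; ring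
      _ ≤ 1 * (a ^ 2 + b ^ 2) := by
        gcongr; nlinarith [sq_abs a, sq_abs b, sq_nonneg (|a| - |b|)]
      _ = a ^ 2 + b ^ 2 := one_mul _
  calc |kernelTimeLogDeriv q a b|
      ≤ |-1 / 2| + |q ^ 2 / (1 - q ^ 2)| + |2 * q * a * b / (1 - q ^ 2) ^ 2| :=
        (abs_sub _ _).trans (by gcongr; exact abs_sub _ _)
    _ ≤ 1 / 2 + 1 / (1 - q ^ 2) + (a ^ 2 + b ^ 2) / (1 - q ^ 2) ^ 2 := by
        rw [abs_div (q ^ 2), abs_div (2 * q * a * b), abs_of_pos hr, abs_of_pos (pow_pos hr 2),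
          abs_of_nonneg (sq_nonneg q)]
        gcongr
        norm_num

lemma abs_kernelMixedDerivRatio_le {q : ℝ} (hq : q ^ 2 < 1) (a b : ℝ) :
    |kernelMixedDerivRatio q a b| ≤
      √(a ^ 2 + b ^ 2) / (1 - q ^ 2) ^ 2 * (7 + 2 * ((a ^ 2 + b ^ 2) / (1 - q ^ 2))) := by
  have htime := abs_kernelTimeLogDeriv_le hq a b
  set r := 1 - q ^ 2
  have hr : 0 < r := by linarith
  have hr1 : r ≤ 1 := by nlinarith [sq_nonneg q]
  have hq1 : |q| ≤ 1 := (abs_lt_of_sq_lt_sq' (by simpa using hq) zero_le_one).2.le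
  have hm2 : √(a ^ 2 + b ^ 2) ^ 2 = a ^ 2 + b ^ 2 := sq_sqrt (by positivity)
  rw [← hm2] at htime
  set m := √(a ^ 2 + b ^ 2)
  have ha : |a| ≤ m := abs_le_sqrt (by nlinarith)
  have hb : |b| ≤ m := abs_le_sqrt (by nlinarith)
  have hspace : |q * b - a| ≤ 2 * m := by
    calc |q * b - a| ≤ |q| * |b| + |a| := by rw [← abs_mul]; exact abs_sub _ _
      _ ≤ 1 * m + m := by gcongr
      _ = 2 * m := by ring
  have hmixed : |2 * q * (b - q * a)| ≤ 4 * m := by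
    calc |2 * q * (b - q * a)| ≤ 2 * |q| * (|b| + |q| * |a|) := by
          rw [abs_mul, abs_mul, abs_two, ← abs_mul]; gcongr; exact abs_sub _ _
      _ ≤ 2 * 1 * (m + 1 * m) := by gcongr
      _ = 4 * m := by ring
  calc |kernelMixedDerivRatio q a b|
      ≤ |q * b - a| / r * |kernelTimeLogDeriv q a b| + |2 * q * (b - q * a)| / r ^ 2 := by
        rw [kernelMixedDerivRatio, ← abs_of_pos hr, ← abs_div, ← abs_mul, abs_of_pos hr,
          ← abs_of_pos (pow_pos hr 2), ← abs_div, abs_of_pos (pow_pos hr 2)]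
        exact abs_sub _ _
    _ ≤ 2 * m / r * (1 / 2 + 1 / r + m ^ 2 / r ^ 2) + 4 * m / r ^ 2 := by gcongr
    _ = m / r + m / r ^ 2 * (6 + 2 * (m ^ 2 / r)) := by field_simp; ring
    _ ≤ m / r ^ 2 + m / r ^ 2 * (6 + 2 * (m ^ 2 / r)) := by gcongr; nlinarith
    _ = m / r ^ 2 * (7 + 2 * ((a ^ 2 + b ^ 2) / r)) := by rw [hm2]; ring

noncomputable def logHermiteHeatKernel (s y z : ℝ) : ℝ :=
  -log π / 2 - s / 2 - log (1 - exp (-2 * s)) / 2 -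
    ((y - exp (-s) * z) ^ 2 + (z - exp (-s) * y) ^ 2) / (2 * (1 - exp (-2 * s)))

lemma exp_neg_two_mul (s : ℝ) : exp (-2 * s) = exp (-s) ^ 2 := by
  rw [← exp_nat_mul]; ring_nf

lemma one_sub_exp_neg_two_mul_pos {s : ℝ} (hs : 0 < s) : 0 < 1 - exp (-2 * s) := by
  rw [sub_pos, exp_lt_one_iff]; linarith

lemma hermiteHeatKernel_eq_exp {s : ℝ} (hs : 0 < s) (y z : ℝ) :
    hermiteHeatKernel s y z = exp (logHermiteHeatKernel s y z) := by
  rw [hermiteHeatKernel, logHermiteHeatKernel, rpow_def_of_pos pi_pos,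
    rpow_def_of_pos (div_pos (exp_pos _) (one_sub_exp_neg_two_mul_pos hs)),
    log_div (exp_pos _).ne' (one_sub_exp_neg_two_mul_pos hs).ne', log_exp, ← exp_add, ← exp_add]
  ring_nf

lemma hasDerivAt_logHermiteHeatKernel_time {s : ℝ} (hs : 0 < s) (y z : ℝ) :
    HasDerivAt (fun s => logHermiteHeatKernel s y z)
      (kernelTimeLogDeriv (exp (-s)) (y - exp (-s) * z) (z - exp (-s) * y)) s := by
  have hr := (one_sub_exp_neg_two_mul_pos hs).ne'
  have hq : HasDerivAt (fun s => exp (-s)) (-exp (-s)) s := by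
    simpa using (hasDerivAt_neg s).exp
  have hq2 : HasDerivAt (fun s => exp (-2 * s)) (-2 * exp (-2 * s)) s := by
    simpa [mul_comm] using ((hasDerivAt_id s).const_mul (-2)).exp
  have hr' := (hasDerivAt_const s (1 : ℝ)).sub hq2
  have hP := (((hasDerivAt_const s y).sub (hq.mul_const z)).pow 2).add
    (((hasDerivAt_const s z).sub (hq.mul_const y)).pow 2)
  have h := (((hasDerivAt_const s (-log π / 2)).sub ((hasDerivAt_id s).div_const 2)).sub
    ((hr'.log hr).div_const 2)).sub (hP.div (hr'.const_mul 2) (by positivity))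
  refine h.congr_deriv ?_
  simp only [Pi.sub_apply, Pi.add_apply, Pi.pow_apply, kernelTimeLogDeriv,
    exp_neg_two_mul] at hr ⊢
  generalize exp (-s) = q at hr ⊢
  field_simp
  ring

lemma deriv_hermiteHeatKernel_time {s : ℝ} (hs : 0 < s) (y z : ℝ) :
    deriv (fun s => hermiteHeatKernel s y z) s = hermiteHeatKernel s y z *
      kernelTimeLogDeriv (exp (-s)) (y - exp (-s) * z) (z - exp (-s) * y) := by
  have hW : (fun s => hermiteHeatKernel s y z) =ᶠ[nhds s]
      fun s => exp (logHermiteHeatKernel s y z) :=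
    Filter.eventually_of_mem (Ioi_mem_nhds hs) fun t ht => hermiteHeatKernel_eq_exp ht y z
  rw [hW.deriv_eq, hermiteHeatKernel_eq_exp hs,
    (hasDerivAt_logHermiteHeatKernel_time hs y z).exp.deriv]

lemma hasDerivAt_logHermiteHeatKernel_space (s y z : ℝ) :
    HasDerivAt (fun y => logHermiteHeatKernel s y z)
      ((exp (-s) * (z - exp (-s) * y) - (y - exp (-s) * z)) / (1 - exp (-s) ^ 2)) y := by
  have hP := ((((hasDerivAt_id y).sub_const (exp (-s) * z)).pow 2).add
    ((((hasDerivAt_id y).const_mul (exp (-s))).const_sub z).pow 2)).div_const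
    (2 * (1 - exp (-2 * s)))
  refine (hP.const_sub _).congr_deriv ?_
  simp only [id_eq, exp_neg_two_mul, div_eq_mul_inv, mul_inv]
  ring

lemma hasDerivAt_kernelTimeLogDeriv_space (q y z : ℝ) :
    HasDerivAt (fun y => kernelTimeLogDeriv q (y - q * z) (z - q * y))
      (-(2 * q * ((z - q * y) - q * (y - q * z))) / (1 - q ^ 2) ^ 2) y := by
  have hab := (((hasDerivAt_id' y).sub_const (q * z)).const_mul (2 * q)).mul
    (((hasDerivAt_id' y).const_mul q).const_sub z)
  refine ((hab.div_const ((1 - q ^ 2) ^ 2)).const_sub (-1 / 2 - q ^ 2 / (1 - q ^ 2))).congr_deriv ?_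
  ring

lemma deriv_deriv_hermiteHeatKernel {s : ℝ} (hs : 0 < s) (y z : ℝ) :
    deriv (fun y => deriv (fun s => hermiteHeatKernel s y z) s) y = hermiteHeatKernel s y z *
      kernelMixedDerivRatio (exp (-s)) (y - exp (-s) * z) (z - exp (-s) * y) := by
  have hW : HasDerivAt (fun y => hermiteHeatKernel s y z)
      (hermiteHeatKernel s y z * ((exp (-s) * (z - exp (-s) * y) - (y - exp (-s) * z)) /
        (1 - exp (-s) ^ 2))) y := by
    simp only [hermiteHeatKernel_eq_exp hs]
    exact (hasDerivAt_logHermiteHeatKernel_space s y z).exp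
  simp only [deriv_hermiteHeatKernel_time hs]
  refine (hW.mul (hasDerivAt_kernelTimeLogDeriv_space (exp (-s)) y z)).deriv.trans ?_
  rw [kernelMixedDerivRatio]
  ring

lemma hermiteHeatKernel_eq_factored {s : ℝ} (hs : 0 < s) (y z : ℝ) :
    hermiteHeatKernel s y z = π ^ (-(1 : ℝ) / 2) * exp (-s / 2) *
      exp (-((y - exp (-s) * z) ^ 2 + (z - exp (-s) * y) ^ 2) / (16 * (1 - exp (-2 * s)))) *
      exp (-(7 / 16 * (((y - exp (-s) * z) ^ 2 + (z - exp (-s) * y) ^ 2) / (1 - exp (-2 * s))))) /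
      √(1 - exp (-2 * s)) := by
  have hr := one_sub_exp_neg_two_mul_pos hs
  have hsplit : exp (-((y - exp (-s) * z) ^ 2 + (z - exp (-s) * y) ^ 2) /
      (2 * (1 - exp (-2 * s)))) =
      exp (-((y - exp (-s) * z) ^ 2 + (z - exp (-s) * y) ^ 2) / (16 * (1 - exp (-2 * s)))) *
      exp (-(7 / 16 * (((y - exp (-s) * z) ^ 2 + (z - exp (-s) * y) ^ 2) / (1 - exp (-2 * s))))) := by
    rw [← exp_add]
    congr 1
    field_simp
    ring
  rw [hermiteHeatKernel, ← sqrt_eq_rpow, sqrt_div' _ hr.le, ← exp_half, hsplit]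
  ring

lemma abs_hermiteHeatKernel_mul_kernelMixedDerivRatio_le {s : ℝ} (hs : 0 < s) (y z : ℝ) :
    |hermiteHeatKernel s y z *
        kernelMixedDerivRatio (exp (-s)) (y - exp (-s) * z) (z - exp (-s) * y)| ≤
      11 * exp (-((y - exp (-s) * z) ^ 2 + (z - exp (-s) * y) ^ 2) / (16 * (1 - exp (-2 * s)))) *
        exp (-s / 2) * (1 - exp (-2 * s)) ^ (-(2 : ℝ)) := by
  have hr := one_sub_exp_neg_two_mul_pos hs
  have hq : exp (-s) ^ 2 < 1 := by rw [← exp_neg_two_mul]; linarith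
  have hX := abs_kernelMixedDerivRatio_le hq (y - exp (-s) * z) (z - exp (-s) * y)
  rw [← exp_neg_two_mul] at hX
  rw [hermiteHeatKernel_eq_factored hs, rpow_neg hr.le, rpow_two]
  set r := 1 - exp (-2 * s)
  set P := (y - exp (-s) * z) ^ 2 + (z - exp (-s) * y) ^ 2
  set X := kernelMixedDerivRatio (exp (-s)) (y - exp (-s) * z) (z - exp (-s) * y)
  have hP : 0 ≤ P := by positivity
  have hu := sqrt_mul_linear_le_exp (div_nonneg hP hr.le)
  have hπ : π ^ (-(1 : ℝ) / 2) ≤ 1 :=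
    rpow_le_one_of_one_le_of_nonpos (by linarith [pi_gt_three]) (by norm_num)
  have hE : exp (7 / 16 * (P / r)) * exp (-(7 / 16 * (P / r))) = 1 := by
    rw [← exp_add, add_neg_cancel, exp_zero]
  calc |π ^ (-(1 : ℝ) / 2) * exp (-s / 2) * exp (-P / (16 * r)) *
          exp (-(7 / 16 * (P / r))) / √r * X|
      = π ^ (-(1 : ℝ) / 2) * exp (-s / 2) * exp (-P / (16 * r)) *
          (exp (-(7 / 16 * (P / r))) / √r * |X|) := by
        rw [abs_mul, abs_of_nonneg (by positivity)]; ring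
    _ ≤ 1 * exp (-s / 2) * exp (-P / (16 * r)) *
          (exp (-(7 / 16 * (P / r))) / √r * (√P / r ^ 2 * (7 + 2 * (P / r)))) := by gcongr
    _ = exp (-s / 2) * exp (-P / (16 * r)) * (r ^ 2)⁻¹ *
          (√(P / r) * (7 + 2 * (P / r)) * exp (-(7 / 16 * (P / r)))) := by
        rw [sqrt_div' _ hr.le]; ring
    _ ≤ exp (-s / 2) * exp (-P / (16 * r)) * (r ^ 2)⁻¹ *
          (11 * exp (7 / 16 * (P / r)) * exp (-(7 / 16 * (P / r)))) := by gcongr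
    _ = 11 * exp (-P / (16 * r)) * exp (-s / 2) * (r ^ 2)⁻¹ := by
        rw [mul_assoc 11, hE]; ring

theorem stmt9 :
    ∃ C > 0, ∀ (y z s : ℝ), 0 < s →
      |deriv (fun y => deriv (fun s => hermiteHeatKernel s y z) s) y| ≤
        C * Real.exp (-((y - Real.exp (-s) * z) ^ 2 + (z - Real.exp (-s) * y) ^ 2) /
            (16 * (1 - Real.exp (-2 * s)))) *
          Real.exp (-s / 2) * (1 - Real.exp (-2 * s)) ^ (-(2 : ℝ)) := by
  refine ⟨11, by norm_num, fun y z s hs => ?_⟩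
  rw [deriv_deriv_hermiteHeatKernel hs]
  exact abs_hermiteHeatKernel_mul_kernelMixedDerivRatio_le hs y z
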